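/- arXiv:2409.11139 — 2 statements merged into one kernel-verified Lean document; each statement's English description precedes it below -/
import Mathlib

section
/- Sufficient decrease of the proximal linearization step: let Γ ⊆ {1,…,N}, let ρ > 0, and let u ∈ ℝ^N satisfy u_j = f_j for all j ∉ Γ and u_j ≠ f_j for all j ∈ Γ. Set w_j = p·|u_j − f_j|^{p−1} for j ∈ Γ. If v ∈ ℝ^N satisfies v_j = f_j for all j ∉ Γ and v minimizes the function H(x) = λ Σ_{j∈Γ} w_j·|x_j − f_j| + Σ_{i=1}^{M} a_i ‖D_i x‖ + (ρ/2)‖x − u‖² over the affine set {x ∈ ℝ^N : x_j = f_j ∀ j ∉ Γ}, then (ρ/2)‖v − u‖² ≤ F(u) − F(v). -/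
/-! By concavity of `t ↦ t ^ p`, the weighted `ℓ¹` term of `H` majorizes the `ℓᵖ` term of `F` up to
its value at `u`, so `F v - F u ≤ H v - H u - (ρ/2)‖v - u‖²`; and `H v ≤ H u` because `u` is
feasible. -/

open Finset

theorem Real.rpow_le_rpow_add_mul_rpow_sub_one_mul_sub {p s t : ℝ} (hp0 : 0 ≤ p) (hp1 : p ≤ 1)
    (hs : 0 < s) (ht : 0 ≤ t) : t ^ p ≤ s ^ p + p * s ^ (p - 1) * (t - s) := by
  have hbernoulli := rpow_one_add_le_one_add_mul_self (s := t / s - 1)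
    (by linarith [div_nonneg ht hs.le]) hp0 hp1
  rw [add_sub_cancel, Real.div_rpow ht hs.le, div_le_iff₀ (by positivity)] at hbernoulli
  calc t ^ p ≤ (1 + p * (t / s - 1)) * s ^ p := hbernoulli
    _ = s ^ p + p * s ^ (p - 1) * (t - s) := by
      rw [Real.rpow_sub_one hs.ne']
      field_simp

theorem sum_abs_sub_rpow_eq_sum_of_eqOn_compl {ι : Type*} [Fintype ι] {x f : ι → ℝ} {p : ℝ}
    (hp : p ≠ 0) {Γ : Finset ι} (hx : ∀ j ∉ Γ, x j = f j) :
    ∑ j, |x j - f j| ^ p = ∑ j ∈ Γ, |x j - f j| ^ p :=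
  (sum_subset (subset_univ Γ) fun j _ hj => by
    rw [hx j hj, sub_self, abs_zero, Real.zero_rpow hp]).symm

theorem sum_abs_sub_rpow_le_linearization {ι : Type*} {f u v w : ι → ℝ} {p : ℝ} (hp0 : 0 ≤ p)
    (hp1 : p ≤ 1) {Γ : Finset ι} (hu : ∀ j ∈ Γ, u j ≠ f j)
    (hw : ∀ j ∈ Γ, w j = p * |u j - f j| ^ (p - 1)) :
    ∑ j ∈ Γ, |v j - f j| ^ p ≤
      ∑ j ∈ Γ, |u j - f j| ^ p + (∑ j ∈ Γ, w j * |v j - f j| - ∑ j ∈ Γ, w j * |u j - f j|) := by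
  rw [← sum_sub_distrib, ← sum_add_distrib]
  refine sum_le_sum fun j hj => ?_
  have hpos : 0 < |u j - f j| := abs_pos.mpr (sub_ne_zero.mpr (hu j hj))
  have := Real.rpow_le_rpow_add_mul_rpow_sub_one_mul_sub hp0 hp1 hpos (abs_nonneg (v j - f j))
  rw [hw j hj]
  linarith

theorem sufficient_decrease_general (N M : ℕ) (f : Fin N → ℝ) (lam p : ℝ)
    (hlam : 0 < lam) (hp0 : 0 < p) (hp1 : p < 1)
    (D : Fin M → Matrix (Fin 3) (Fin N) ℝ)
    (a : Fin M → ℝ)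
    (F : (Fin N → ℝ) → ℝ)
    (hF : ∀ u, F u =
      lam * ∑ j, |u j - f j| ^ p +
      ∑ i, a i * Real.sqrt (∑ k, ((D i).mulVec u) k ^ 2))
    (Γ : Finset (Fin N)) (ρ : ℝ)
    (u : Fin N → ℝ) (hu1 : ∀ j ∉ Γ, u j = f j) (hu2 : ∀ j ∈ Γ, u j ≠ f j)
    (w : Fin N → ℝ) (hw : ∀ j ∈ Γ, w j = p * |u j - f j| ^ (p - 1))
    (H : (Fin N → ℝ) → ℝ)
    (hH : ∀ x, H x =
      lam * ∑ j ∈ Γ, w j * |x j - f j| +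
      ∑ i, a i * Real.sqrt (∑ k, ((D i).mulVec x) k ^ 2) +
      ρ / 2 * ∑ j, (x j - u j) ^ 2)
    (v : Fin N → ℝ) (hv1 : ∀ j ∉ Γ, v j = f j)
    (hv2 : ∀ x : Fin N → ℝ, (∀ j ∉ Γ, x j = f j) → H v ≤ H x) :
    ρ / 2 * ∑ j, (v j - u j) ^ 2 ≤ F u - F v := by
  have hHvu : H v ≤ H u := hv2 u hu1
  simp only [hH, sub_self, zero_pow two_ne_zero, sum_const_zero, mul_zero, add_zero] at hHvu
  have hlin := mul_le_mul_of_nonneg_left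
    (sum_abs_sub_rpow_le_linearization (v := v) hp0.le hp1.le hu2 hw) hlam.le
  rw [hF, hF, sum_abs_sub_rpow_eq_sum_of_eqOn_compl hp0.ne' hu1,
    sum_abs_sub_rpow_eq_sum_of_eqOn_compl hp0.ne' hv1]
  linarith

/-- Sufficient decrease of the proximal linearization step:
if `u` agrees with `f` off `Γ` and differs from `f` on `Γ`, weights
`w_j = p|u_j - f_j|^(p-1)`, and `v` minimizes the proximally linearized
objective `H` over the affine set `{x : x_j = f_j ∀ j ∉ Γ}`, then
`(ρ/2)‖v - u‖² ≤ F(u) - F(v)`. -/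
theorem sufficient_decrease (N M : ℕ) (f : Fin N → ℝ) (lam p : ℝ)
    (hlam : 0 < lam) (hp0 : 0 < p) (hp1 : p < 1)
    (D : Fin M → Matrix (Fin 3) (Fin N) ℝ)
    (a : Fin M → ℝ) (ha : ∀ i, 0 < a i)
    (F : (Fin N → ℝ) → ℝ)
    (hF : ∀ u, F u =
      lam * ∑ j, |u j - f j| ^ p +
      ∑ i, a i * Real.sqrt (∑ k, ((D i).mulVec u) k ^ 2))
    (Γ : Finset (Fin N)) (ρ : ℝ) (hρ : 0 < ρ)
    (u : Fin N → ℝ) (hu1 : ∀ j ∉ Γ, u j = f j) (hu2 : ∀ j ∈ Γ, u j ≠ f j)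
    (w : Fin N → ℝ) (hw : ∀ j ∈ Γ, w j = p * |u j - f j| ^ (p - 1))
    (H : (Fin N → ℝ) → ℝ)
    (hH : ∀ x, H x =
      lam * ∑ j ∈ Γ, w j * |x j - f j| +
      ∑ i, a i * Real.sqrt (∑ k, ((D i).mulVec x) k ^ 2) +
      ρ / 2 * ∑ j, (x j - u j) ^ 2)
    (v : Fin N → ℝ) (hv1 : ∀ j ∉ Γ, v j = f j)
    (hv2 : ∀ x : Fin N → ℝ, (∀ j ∉ Γ, x j = f j) → H v ≤ H x) :
    ρ / 2 * ∑ j, (v j - u j) ^ 2 ≤ F u - F v :=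
  sufficient_decrease_general N M f lam p hlam hp0 hp1 D a F hF Γ ρ u hu1 hu2 w hw H hH v hv1 hv2
end

section
/- Quantitative bound on the relative-error vector (content of Lemma 4.2): let Γ ⊆ {1,…,N}, ε > 0, ρ > 0, and let u, v ∈ ℝ^N satisfy |u_j − f_j| ≥ ε and |v_j − f_j| ≥ ε for all j ∈ Γ. Define w_j(x) = p·|x_j − f_j|^{p−1} for j ∈ Γ, and define the vector α = λ Σ_{j∈Γ} (w_j(v) − w_j(u))·sgn(v_j − f_j)·e_j − ρ·(v − u) ∈ ℝ^N, where e_j is the j-th standard basis vector. Then ‖α‖ ≤ (λ·p·(1−p)·ε^{p−2}·N + ρ)·‖v − u‖. -/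
/-!
Coordinatewise, by the mean value theorem `t ↦ t ^ (p - 1)` is `(1 - p) ε ^ (p - 2)`-Lipschitz
on `[ε, ∞)`; with the reverse triangle inequality `||v_j - f_j| - |u_j - f_j|| ≤ |v_j - u_j|`
and `|sgn| ≤ 1` this gives `|α_j| ≤ (λ p (1 - p) ε ^ (p - 2) + ρ) |v_j - u_j|`, and such a
coordinatewise bound passes to Euclidean norms. The factor `N ≥ 1` is slack.
-/

open Real

lemma abs_rpow_sub_rpow_le {q ε a b : ℝ} (hq : q ≤ 1) (hε : 0 < ε) (ha : ε ≤ a) (hb : ε ≤ b) :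
    |a ^ q - b ^ q| ≤ |q| * ε ^ (q - 1) * |a - b| := by
  have hderiv : ∀ x ∈ Set.Ici ε, HasDerivWithinAt (· ^ q) (q * x ^ (q - 1)) (Set.Ici ε) x :=
    fun x hx => (hasDerivAt_rpow_const (Or.inl (hε.trans_le hx).ne')).hasDerivWithinAt
  have hbound : ∀ x ∈ Set.Ici ε, ‖q * x ^ (q - 1)‖ ≤ |q| * ε ^ (q - 1) := fun x hx => by
    rw [norm_mul, Real.norm_eq_abs, Real.norm_of_nonneg (rpow_nonneg (hε.le.trans hx) _)]
    exact mul_le_mul_of_nonneg_left (rpow_le_rpow_of_nonpos hε hx (by linarith)) (abs_nonneg q)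
  simpa only [Real.norm_eq_abs] using
    (convex_Ici ε).norm_image_sub_le_of_norm_hasDerivWithin_le hderiv hbound hb ha

lemma abs_mul_abs_rpow_sub_le {p ε x y : ℝ} (hp0 : 0 ≤ p) (hp1 : p ≤ 1) (hε : 0 < ε)
    (hx : ε ≤ |x|) (hy : ε ≤ |y|) :
    |p * |x| ^ (p - 1) - p * |y| ^ (p - 1)| ≤ p * (1 - p) * ε ^ (p - 2) * |x - y| := by
  have hlip : |(|x| ^ (p - 1) - |y| ^ (p - 1))| ≤ (1 - p) * ε ^ (p - 2) * |(|x| - |y|)| := by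
    have := abs_rpow_sub_rpow_le (q := p - 1) (by linarith) hε hx hy
    rwa [abs_of_nonpos (by linarith : p - 1 ≤ 0), neg_sub, sub_sub, one_add_one_eq_two] at this
  have hc : 0 ≤ (1 - p) * ε ^ (p - 2) := mul_nonneg (by linarith) (rpow_nonneg hε.le _)
  calc |p * |x| ^ (p - 1) - p * |y| ^ (p - 1)| = p * |(|x| ^ (p - 1) - |y| ^ (p - 1))| := by
        rw [← mul_sub, abs_mul, abs_of_nonneg hp0]
    _ ≤ p * ((1 - p) * ε ^ (p - 2) * |x - y|) := by
        gcongr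
        exact hlip.trans (mul_le_mul_of_nonneg_left (abs_abs_sub_abs_le_abs_sub x y) hc)
    _ = p * (1 - p) * ε ^ (p - 2) * |x - y| := by ring

lemma abs_mul_weight_sub_mul_sign_le {lam p ε x y : ℝ} (hlam : 0 ≤ lam) (hp0 : 0 ≤ p)
    (hp1 : p ≤ 1) (hε : 0 < ε) (hx : ε ≤ |x|) (hy : ε ≤ |y|) :
    |lam * (p * |x| ^ (p - 1) - p * |y| ^ (p - 1)) * Real.sign x| ≤
      lam * p * (1 - p) * ε ^ (p - 2) * |x - y| := by
  have hsign : |Real.sign x| ≤ 1 := by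
    rcases Real.sign_apply_eq x with h | h | h <;> simp [h]
  calc |lam * (p * |x| ^ (p - 1) - p * |y| ^ (p - 1)) * Real.sign x|
      ≤ lam * |p * |x| ^ (p - 1) - p * |y| ^ (p - 1)| := by
        rw [abs_mul, abs_mul, abs_of_nonneg hlam]
        exact mul_le_of_le_one_right (by positivity) hsign
    _ ≤ lam * (p * (1 - p) * ε ^ (p - 2) * |x - y|) :=
        mul_le_mul_of_nonneg_left (abs_mul_abs_rpow_sub_le hp0 hp1 hε hx hy) hlam
    _ = lam * p * (1 - p) * ε ^ (p - 2) * |x - y| := by ring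

lemma sqrt_sum_sq_le_mul_sqrt_sum_sq {ι : Type*} (s : Finset ι) {x y : ι → ℝ} {C : ℝ}
    (hC : 0 ≤ C) (h : ∀ i ∈ s, |x i| ≤ C * |y i|) :
    √(∑ i ∈ s, x i ^ 2) ≤ C * √(∑ i ∈ s, y i ^ 2) := by
  rw [← sqrt_sq hC, ← sqrt_mul (sq_nonneg C), Finset.mul_sum]
  gcongr with i hi
  rw [← mul_pow]
  exact sq_le_sq.mpr (by rw [abs_mul, abs_of_nonneg hC]; exact h i hi)

/-- Quantitative bound on the relative-error vector: with
`|u_j - f_j| ≥ ε`, `|v_j - f_j| ≥ ε` on `Γ`, weights `w_j(x) = p|x_j - f_j|^(p-1)`,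
and `α = λ ∑_{j∈Γ} (w_j(v) - w_j(u))·sgn(v_j - f_j)·e_j - ρ(v - u)`, one has
`‖α‖ ≤ (λp(1-p)ε^(p-2)·N + ρ)‖v - u‖`. -/
theorem alpha_bound (N : ℕ) (f : Fin N → ℝ) (lam p : ℝ)
    (hlam : 0 < lam) (hp0 : 0 < p) (hp1 : p < 1)
    (Γ : Finset (Fin N)) (ε ρ : ℝ) (hε : 0 < ε) (hρ : 0 < ρ)
    (u v : Fin N → ℝ)
    (hu : ∀ j ∈ Γ, ε ≤ |u j - f j|) (hv : ∀ j ∈ Γ, ε ≤ |v j - f j|)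
    (α : Fin N → ℝ)
    (hα : ∀ j : Fin N, α j =
      (if j ∈ Γ then
        lam * (p * |v j - f j| ^ (p - 1) - p * |u j - f j| ^ (p - 1)) *
          Real.sign (v j - f j)
      else 0) - ρ * (v j - u j)) :
    Real.sqrt (∑ j, α j ^ 2) ≤
      (lam * p * (1 - p) * ε ^ (p - 2) * N + ρ) *
        Real.sqrt (∑ j, (v j - u j) ^ 2) := by
  set L := lam * p * (1 - p) * ε ^ (p - 2)
  have hL : 0 ≤ L := by have := sub_pos.mpr hp1; positivity
  refine sqrt_sum_sq_le_mul_sqrt_sum_sq _ (by positivity) fun j _ => ?_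
  have hN : (1 : ℝ) ≤ N := by exact_mod_cast j.pos
  have hweight : |if j ∈ Γ then lam * (p * |v j - f j| ^ (p - 1) - p * |u j - f j| ^ (p - 1)) *
      Real.sign (v j - f j) else 0| ≤ L * |v j - u j| := by
    split_ifs with hj
    · simpa only [sub_sub_sub_cancel_right] using
        abs_mul_weight_sub_mul_sign_le hlam.le hp0.le hp1.le hε (hv j hj) (hu j hj)
    · simpa using mul_nonneg hL (abs_nonneg _)
  calc |α j| ≤ L * |v j - u j| + ρ * |v j - u j| := by
        rw [hα j]
        refine (abs_sub _ _).trans ?_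
        rw [abs_mul, abs_of_pos hρ]
        gcongr
    _ ≤ (L * N + ρ) * |v j - u j| := by
        nlinarith [mul_le_mul_of_nonneg_left hN (mul_nonneg hL (abs_nonneg (v j - u j)))]
end
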